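/- Let ν be a norm integral h-invariant vector measure on a compact group G and Φ a Young function. If f belongs to L^Φ(ν), the closure of the simple functions in the weak Orlicz norm ‖·‖_{ν,Φ}, then f_h = f∘h⁻¹ also belongs to L^Φ(ν). -/

import Mathlib

open MeasureTheory Filter Topology
open scoped ENNReal NNReal

set_option linter.unusedSectionVars false
noncomputable section

variable {G : Type*} [Group G] [TopologicalSpace G] [IsTopologicalGroup G]
  [CompactSpace G] [MeasurableSpace G] [BorelSpace G]
variable {X : Type*} [NormedAddCommGroup X] [NormedSpace ℂ X] [CompleteSpace X]

/-- The integral `∫_G φ dν` of a simple function `φ` against a vector measure `ν`. -/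
def simpleIntegral (ν : VectorMeasure G X) (φ : SimpleFunc G ℂ) : X :=
  ∑ c ∈ φ.range, c • ν (⇑φ ⁻¹' {c})

/-- `ν` is norm integral `h`-invariant: `‖∫ φ∘h⁻¹ dν‖ = ‖∫ φ dν‖` for all simple `φ`. -/
def NormIntegralInvariant (ν : VectorMeasure G X) (h : G ≃ₜ G) : Prop :=
  ∀ φ : SimpleFunc G ℂ,
    ‖simpleIntegral ν (φ.comp ⇑h.symm h.symm.continuous.measurable)‖ = ‖simpleIntegral ν φ‖

/-- `ν` is norm integral translation invariant: for every `s ∈ G`,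
`‖∫ τ_s φ dν‖ = ‖∫ φ dν‖` for all simple `φ`, where `τ_s φ (t) = φ (s⁻¹ t)`. -/
def NormIntegralTranslationInvariant (ν : VectorMeasure G X) : Prop :=
  ∀ s : G, ∀ φ : SimpleFunc G ℂ,
    ‖simpleIntegral ν (φ.comp (fun t => s⁻¹ * t)
      ((continuous_const.mul continuous_id).measurable))‖ = ‖simpleIntegral ν φ‖

/-- The scalar set function `⟨ν, x'⟩ : A ↦ x'(ν A)`. -/
def pairVM (ν : VectorMeasure G X) (x' : X →L[ℂ] ℂ) : Set G → ℂ :=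
  fun A => x' (ν A)

/-- `m` is the total variation measure of the complex set function `μv`:
on every measurable set it equals the supremum of `∑ ‖μv (B i)‖` over finite disjoint
measurable families of subsets. -/
def IsVariationOf (μv : Set G → ℂ) (m : Measure G) : Prop :=
  ∀ A : Set G, MeasurableSet A →
    m A = ⨆ (n : ℕ) (B : Fin n → Set G)
      (_ : ∀ i, MeasurableSet (B i) ∧ B i ⊆ A)
      (_ : Pairwise (Function.onFun Disjoint B)),
        ∑ i, (‖μv (B i)‖₊ : ℝ≥0∞)

/-- `Φ` is a Young function. -/
def IsYoung (Φ : ℝ → ℝ) : Prop :=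
  StrictMonoOn Φ (Set.Ici 0) ∧ ConvexOn ℝ (Set.Ici 0) Φ ∧ ContinuousOn Φ (Set.Ici 0) ∧
    (∀ t, 0 ≤ t → (Φ t = 0 ↔ t = 0)) ∧ Tendsto Φ atTop atTop

/-- The complementary Young function `Ψ(t) = sup {ts - Φ(s) : s ≥ 0}`. -/
def youngConjugate (Φ : ℝ → ℝ) : ℝ → ℝ :=
  fun t => sSup {y | ∃ s : ℝ, 0 ≤ s ∧ y = t * s - Φ s}

/-- The Luxemburg norm of `f` with respect to the measure `m` and Young function `Φ`,
as an extended real number. -/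
def luxNorm (Φ : ℝ → ℝ) (m : Measure G) (f : G → ℂ) : ℝ≥0∞ :=
  sInf {k : ℝ≥0∞ | ∃ r : ℝ, 0 < r ∧ k = ENNReal.ofReal r ∧
    ∫⁻ t, ENNReal.ofReal (Φ (‖f t‖ / r)) ∂m ≤ 1}

/-- The weak Orlicz norm `‖f‖_{ν,Φ} = sup_{‖x'‖ ≤ 1} ‖f‖_{L^Φ(|⟨ν,x'⟩|)}`, where
`vvar x'` is the variation measure `|⟨ν,x'⟩|`. -/
def weakNorm (vvar : (X →L[ℂ] ℂ) → Measure G) (Φ : ℝ → ℝ) (f : G → ℂ) : ℝ≥0∞ :=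
  ⨆ (x' : X →L[ℂ] ℂ) (_ : ‖x'‖ ≤ 1), luxNorm Φ (vvar x') f

/-- Membership in `L^Φ(ν)`, the closure of the simple functions in the weak Orlicz norm. -/
def MemLPhi (vvar : (X →L[ℂ] ℂ) → Measure G) (Φ : ℝ → ℝ) (f : G → ℂ) : Prop :=
  Measurable f ∧ ∀ ε : ℝ≥0∞, 0 < ε →
    ∃ φ : SimpleFunc G ℂ, weakNorm vvar Φ (fun t => f t - φ t) < ε

/-- The weak `L¹(ν)` norm `‖f‖_ν = sup_{‖x'‖ ≤ 1} ∫ |f| d|⟨ν,x'⟩|`. -/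
def weakL1Norm (vvar : (X →L[ℂ] ℂ) → Measure G) (f : G → ℂ) : ℝ≥0∞ :=
  ⨆ (x' : X →L[ℂ] ℂ) (_ : ‖x'‖ ≤ 1), ∫⁻ t, ‖f t‖₊ ∂(vvar x')

/-- The semivariation `‖ν‖(G) = sup_{‖x'‖ ≤ 1} |⟨ν,x'⟩|(G)`. -/
def semivariation (vvar : (X →L[ℂ] ℂ) → Measure G) : ℝ≥0∞ :=
  ⨆ (x' : X →L[ℂ] ℂ) (_ : ‖x'‖ ≤ 1), vvar x' Set.univ

/-- `ν` is absolutely continuous with respect to `m`: `ν(A) → 0` as `m(A) → 0`. -/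
def VMAbsCont (ν : VectorMeasure G X) (m : Measure G) : Prop :=
  ∀ ε : ℝ, 0 < ε → ∃ δ : ℝ, 0 < δ ∧
    ∀ A : Set G, MeasurableSet A → m A < ENNReal.ofReal δ → ‖ν A‖ < ε

/-- Convolution with respect to the measure `m`: `(f*g)(t) = ∫ f(s) g(s⁻¹t) dm(s)`. -/
def conv (m : Measure G) (f g : G → ℂ) : G → ℂ :=
  fun t => ∫ s, f s * g (s⁻¹ * t) ∂m


-- auxiliary
def Tnu (ν : VectorMeasure G X) : Set G → ℂ →L[ℝ] X :=
  fun A => (ContinuousLinearMap.toSpanSingleton ℂ (ν A)).restrictScalars ℝ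

lemma simpleIntegral_eq_setTo (ν : VectorMeasure G X) (g : SimpleFunc G ℂ) :
    simpleIntegral ν g = SimpleFunc.setToSimpleFunc (Tnu ν) g := by
  simp [simpleIntegral, SimpleFunc.setToSimpleFunc, Tnu,
    ContinuousLinearMap.toSpanSingleton_apply]

lemma Tnu_finMeasAdditive (ν : VectorMeasure G X) :
    FinMeasAdditive (0 : Measure G) (Tnu ν) := by
  intro s t hs ht _ _ hst
  ext c
  simp [Tnu, ContinuousLinearMap.toSpanSingleton_apply,
    VectorMeasure.of_union hst hs ht, smul_add]

lemma Tnu_empty (ν : VectorMeasure G X) : Tnu ν ∅ = 0 := by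
  ext c
  simp [Tnu, ContinuousLinearMap.toSpanSingleton_apply]

lemma simpleIntegral_add (ν : VectorMeasure G X) (f g : SimpleFunc G ℂ) :
    simpleIntegral ν (f + g) = simpleIntegral ν f + simpleIntegral ν g := by
  simp only [simpleIntegral_eq_setTo]
  exact SimpleFunc.setToSimpleFunc_add _ (Tnu_finMeasAdditive ν)
    integrable_zero_measure integrable_zero_measure

lemma simpleIntegral_smul (ν : VectorMeasure G X) (c : ℂ) (f : SimpleFunc G ℂ) :
    simpleIntegral ν (c • f) = c • simpleIntegral ν f := by
  simp only [simpleIntegral_eq_setTo]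
  exact SimpleFunc.setToSimpleFunc_smul _ (Tnu_finMeasAdditive ν)
    (fun c s x => by simp [Tnu, ContinuousLinearMap.toSpanSingleton_apply, smul_smul, mul_comm])
    c integrable_zero_measure

lemma simpleIntegral_indicator (ν : VectorMeasure G X) {s : Set G} (hs : MeasurableSet s)
    (c : ℂ) :
    simpleIntegral ν (SimpleFunc.piecewise s hs (SimpleFunc.const G c) (SimpleFunc.const G 0))
      = c • ν s := by
  rw [simpleIntegral_eq_setTo, SimpleFunc.setToSimpleFunc_indicator _ (Tnu_empty ν) hs c]
  simp [Tnu, ContinuousLinearMap.toSpanSingleton_apply]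

lemma simpleIntegral_zero (ν : VectorMeasure G X) : simpleIntegral ν 0 = 0 := by
  refine Finset.sum_eq_zero fun c hc => ?_
  have : c = 0 := by
    rcases SimpleFunc.mem_range.mp hc with ⟨t, ht⟩
    simpa using ht.symm
  simp [this]

lemma exists_unit (z : ℂ) : ∃ a : ℂ, ‖a‖ = 1 ∧ a * z = (‖z‖ : ℂ) := by
  by_cases hz : z = 0
  · exact ⟨1, by simp [hz]⟩
  · refine ⟨(‖z‖ : ℂ) / z, ?_, by field_simp⟩
    rw [norm_div, Complex.norm_real, Real.norm_eq_abs, abs_of_nonneg (norm_nonneg z),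
      div_self (norm_ne_zero_iff.mpr hz)]

lemma simpleFunc_sum_apply {ι : Type} (m : Finset ι) (g : ι → SimpleFunc G ℂ) (t : G) :
    (∑ i ∈ m, g i) t = ∑ i ∈ m, (g i) t := by
  induction m using Finset.cons_induction with
  | empty => simp
  | cons a s ha ih => rw [Finset.sum_cons, Finset.sum_cons, SimpleFunc.coe_add, Pi.add_apply, ih]

def Bdd (φ : SimpleFunc G ℝ≥0) : Type _ :=
  {g : SimpleFunc G ℂ // ∀ t, ‖g t‖ ≤ ((φ t : ℝ≥0) : ℝ)}

instance (φ : SimpleFunc G ℝ≥0) : Nonempty (Bdd φ) :=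
  ⟨⟨0, fun t => by simp⟩⟩

def Sx (ν : VectorMeasure G X) (x' : X →L[ℂ] ℂ) (φ : SimpleFunc G ℝ≥0) : ℝ≥0∞ :=
  ⨆ p : Bdd φ, (‖x' (simpleIntegral ν p.1)‖₊ : ℝ≥0∞)

def SS (ν : VectorMeasure G X) (φ : SimpleFunc G ℝ≥0) : ℝ≥0∞ :=
  ⨆ p : Bdd φ, (‖simpleIntegral ν p.1‖₊ : ℝ≥0∞)

def Wf (vvar : (X →L[ℂ] ℂ) → Measure G) (u : G → ℝ≥0∞) : ℝ≥0∞ :=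
  ⨆ (x' : X →L[ℂ] ℂ) (_ : ‖x'‖ ≤ 1), ∫⁻ t, u t ∂(vvar x')

lemma vvar_single {ν : VectorMeasure G X} {vvar : (X →L[ℂ] ℂ) → Measure G}
    (hvar : ∀ x', IsVariationOf (pairVM ν x') (vvar x')) (x' : X →L[ℂ] ℂ)
    {A : Set G} (hA : MeasurableSet A) :
    (‖x' (ν A)‖₊ : ℝ≥0∞) ≤ vvar x' A := by
  rw [hvar x' A hA]
  refine le_iSup_of_le 1 ?_
  refine le_iSup_of_le (fun _ => A) ?_
  refine le_iSup_of_le (fun _ => ⟨hA, subset_rfl⟩) ?_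
  refine le_iSup_of_le (fun i j hij => absurd (Subsingleton.elim i j) hij) ?_
  simp [pairVM]

lemma Sx_superadd (ν : VectorMeasure G X) (x' : X →L[ℂ] ℂ) (f g : SimpleFunc G ℝ≥0) :
    Sx ν x' f + Sx ν x' g ≤ Sx ν x' (f + g) := by
  rw [Sx, ENNReal.iSup_add]
  refine iSup_le fun p => ?_
  rw [Sx, ENNReal.add_iSup]
  refine iSup_le fun q => ?_
  obtain ⟨a, ha1, ha2⟩ := exists_unit (x' (simpleIntegral ν p.1))
  obtain ⟨b, hb1, hb2⟩ := exists_unit (x' (simpleIntegral ν q.1))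
  have ha0 : a ≠ 0 := by intro hh; rw [hh] at ha1; simp at ha1
  set θ : ℂ := a⁻¹ * b with hθdef
  have hθ1 : ‖θ‖ = 1 := by rw [hθdef, norm_mul, norm_inv, ha1, hb1]; norm_num
  have hbd : ∀ t, ‖(p.1 + θ • q.1) t‖ ≤ (((f + g) t : ℝ≥0) : ℝ) := by
    intro t
    calc ‖(p.1 + θ • q.1) t‖ = ‖p.1 t + θ * q.1 t‖ := by
          simp [SimpleFunc.coe_add, SimpleFunc.coe_smul, smul_eq_mul]
      _ ≤ ‖p.1 t‖ + ‖θ‖ * ‖q.1 t‖ := by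
          refine (norm_add_le _ _).trans ?_
          rw [norm_mul]
      _ ≤ ((f t : ℝ≥0) : ℝ) + ((g t : ℝ≥0) : ℝ) := by
          rw [hθ1, one_mul]; exact add_le_add (p.2 t) (q.2 t)
      _ = (((f + g) t : ℝ≥0) : ℝ) := by simp
  have hval : x' (simpleIntegral ν (p.1 + θ • q.1))
      = x' (simpleIntegral ν p.1) + θ * x' (simpleIntegral ν q.1) := by
    rw [simpleIntegral_add, simpleIntegral_smul, map_add, _root_.map_smul, smul_eq_mul]
  have hkey : a * (x' (simpleIntegral ν p.1) + θ * x' (simpleIntegral ν q.1))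
      = ((‖x' (simpleIntegral ν p.1)‖ : ℂ) + (‖x' (simpleIntegral ν q.1)‖ : ℂ)) := by
    rw [mul_add, ha2, hθdef]
    congr 1
    rw [show a * (a⁻¹ * b * x' (simpleIntegral ν q.1)) = b * x' (simpleIntegral ν q.1) by
      field_simp]
    exact hb2
  have hnorm : ‖x' (simpleIntegral ν (p.1 + θ • q.1))‖
      = ‖x' (simpleIntegral ν p.1)‖ + ‖x' (simpleIntegral ν q.1)‖ := by
    rw [hval, ← one_mul ‖_ + _‖, ← ha1, ← norm_mul, hkey, ← Complex.ofReal_add,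
      Complex.norm_real, Real.norm_eq_abs, abs_of_nonneg (by positivity)]
  refine le_iSup_of_le (⟨p.1 + θ • q.1, hbd⟩ : Bdd (f + g)) ?_
  rw [← ENNReal.coe_add, ENNReal.coe_le_coe, ← NNReal.coe_le_coe]
  push_cast [coe_nnnorm]
  rw [hnorm]

lemma lintegral_le_Sx {ν : VectorMeasure G X} {vvar : (X →L[ℂ] ℂ) → Measure G}
    (hvar : ∀ x', IsVariationOf (pairVM ν x') (vvar x'))
    (φ : SimpleFunc G ℝ≥0) (x' : X →L[ℂ] ℂ) :
    ∫⁻ t, ((φ t : ℝ≥0) : ℝ≥0∞) ∂(vvar x') ≤ Sx ν x' φ := by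
  induction φ using SimpleFunc.induction with
  | @const c s hs =>
    have hcoe : (fun t => (((SimpleFunc.piecewise s hs (SimpleFunc.const G c)
        (SimpleFunc.const G 0)) t : ℝ≥0) : ℝ≥0∞))
        = fun t => s.indicator (fun _ => ((c : ℝ≥0) : ℝ≥0∞)) t := by
      funext t; by_cases ht : t ∈ s <;> simp [SimpleFunc.piecewise_apply, ht]
    rw [hcoe, lintegral_indicator_const hs, hvar x' s hs]
    simp only [pairVM, ENNReal.mul_iSup]
    refine iSup_le fun n => iSup_le fun B => iSup_le fun h1 => iSup_le fun h2 => ?_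
    choose θ hθ1 hθ2 using fun i : Fin n => exists_unit (x' (ν (B i)))
    set gI : Fin n → SimpleFunc G ℂ := fun i =>
      SimpleFunc.piecewise (B i) (h1 i).1
        (SimpleFunc.const G (θ i * ((c : ℝ) : ℂ))) (SimpleFunc.const G 0) with hgI
    set g : SimpleFunc G ℂ := ∑ i, gI i with hgdef
    have hSI : ∀ m : Finset (Fin n),
        simpleIntegral ν (∑ i ∈ m, gI i) = ∑ i ∈ m, (θ i * ((c : ℝ) : ℂ)) • ν (B i) := by
      intro m
      induction m using Finset.cons_induction with
      | empty => simpa using simpleIntegral_zero ν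
      | cons j mm hj ih =>
        rw [Finset.sum_cons, Finset.sum_cons, simpleIntegral_add, ih, hgI,
          simpleIntegral_indicator]
    have hbd : ∀ t, ‖g t‖ ≤ (((SimpleFunc.piecewise s hs (SimpleFunc.const G c)
        (SimpleFunc.const G 0)) t : ℝ≥0) : ℝ) := by
      intro t
      rw [hgdef, simpleFunc_sum_apply]
      by_cases hti : ∃ i, t ∈ B i
      · obtain ⟨i₀, hi₀⟩ := hti
        have hsum : ∑ i, (gI i) t = θ i₀ * ((c : ℝ) : ℂ) := by
          rw [Finset.sum_eq_single i₀]
          · simp [hgI, SimpleFunc.piecewise_apply, hi₀]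
          · intro j _ hj
            have : t ∉ B j := fun htj => Set.disjoint_left.mp (h2 hj) htj hi₀
            simp [hgI, SimpleFunc.piecewise_apply, this]
          · intro hj; exact absurd (Finset.mem_univ i₀) hj
        have hts : t ∈ s := (h1 i₀).2 hi₀
        rw [hsum, norm_mul, hθ1 i₀, one_mul]
        simp [SimpleFunc.piecewise_apply, hts]
      · push_neg at hti
        have hsum : ∑ i, (gI i) t = 0 :=
          Finset.sum_eq_zero fun j _ => by simp [hgI, SimpleFunc.piecewise_apply, hti j]
        rw [hsum, norm_zero]
        positivity
    have hnormval : ‖x' (simpleIntegral ν g)‖ = ∑ i, (c : ℝ) * ‖x' (ν (B i))‖ := by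
      have hval : x' (simpleIntegral ν g)
          = ((∑ i, (c : ℝ) * ‖x' (ν (B i))‖ : ℝ) : ℂ) := by
        rw [hgdef, hSI Finset.univ, map_sum]
        push_cast
        refine Finset.sum_congr rfl fun i _ => ?_
        rw [_root_.map_smul, smul_eq_mul]
        calc (θ i * ((c : ℝ) : ℂ)) * x' (ν (B i))
            = ((c : ℝ) : ℂ) * (θ i * x' (ν (B i))) := by ring
          _ = ((c : ℝ) : ℂ) * ((‖x' (ν (B i))‖ : ℝ) : ℂ) := by rw [hθ2 i]
      rw [hval, Complex.norm_real, Real.norm_eq_abs,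
        abs_of_nonneg (Finset.sum_nonneg fun i _ => mul_nonneg c.coe_nonneg (norm_nonneg _))]
    refine le_iSup_of_le (⟨g, hbd⟩ : Bdd _) ?_
    rw [← ENNReal.coe_finset_sum, ← ENNReal.coe_mul, ENNReal.coe_le_coe, ← NNReal.coe_le_coe]
    push_cast [coe_nnnorm]
    rw [hnormval, Finset.mul_sum]
  | @add f g hdisj hf hg =>
    have hmf : Measurable fun t => ((f t : ℝ≥0) : ℝ≥0∞) := f.measurable.coe_nnreal_ennreal
    calc ∫⁻ t, (((f + g) t : ℝ≥0) : ℝ≥0∞) ∂(vvar x')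
        = ∫⁻ t, (((f t : ℝ≥0) : ℝ≥0∞) + ((g t : ℝ≥0) : ℝ≥0∞)) ∂(vvar x') := by
          simp [SimpleFunc.coe_add]
      _ = ∫⁻ t, ((f t : ℝ≥0) : ℝ≥0∞) ∂(vvar x') + ∫⁻ t, ((g t : ℝ≥0) : ℝ≥0∞) ∂(vvar x') :=
          lintegral_add_left hmf _
      _ ≤ Sx ν x' f + Sx ν x' g := add_le_add hf hg
      _ ≤ Sx ν x' (f + g) := Sx_superadd ν x' f g

lemma Sx_le_SS (ν : VectorMeasure G X) {x' : X →L[ℂ] ℂ} (hx' : ‖x'‖ ≤ 1)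
    (φ : SimpleFunc G ℝ≥0) : Sx ν x' φ ≤ SS ν φ := by
  refine iSup_mono fun p => ?_
  rw [ENNReal.coe_le_coe, ← NNReal.coe_le_coe]
  push_cast [coe_nnnorm]
  exact (x'.le_opNorm _).trans (mul_le_of_le_one_left (norm_nonneg _) hx')

lemma SS_le_Wf {ν : VectorMeasure G X} {vvar : (X →L[ℂ] ℂ) → Measure G}
    (hvar : ∀ x', IsVariationOf (pairVM ν x') (vvar x')) (φ : SimpleFunc G ℝ≥0) :
    SS ν φ ≤ Wf vvar (fun t => ((φ t : ℝ≥0) : ℝ≥0∞)) := by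
  refine iSup_le fun p => ?_
  obtain ⟨x', hx'1, hx'2⟩ := exists_dual_vector'' ℂ (simpleIntegral ν p.1)
  have h0 : ‖simpleIntegral ν p.1‖₊ = ‖x' (simpleIntegral ν p.1)‖₊ :=
    NNReal.eq (by rw [coe_nnnorm, coe_nnnorm, hx'2, RCLike.norm_ofReal, abs_norm])
  have hexp : x' (simpleIntegral ν p.1)
      = ∑ cc ∈ p.1.range, cc * x' (ν (⇑p.1 ⁻¹' {cc})) := by
    rw [simpleIntegral, map_sum]
    exact Finset.sum_congr rfl fun cc _ => by rw [_root_.map_smul, smul_eq_mul]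
  rw [h0]
  calc (‖x' (simpleIntegral ν p.1)‖₊ : ℝ≥0∞)
      ≤ ∑ cc ∈ p.1.range, (‖cc * x' (ν (⇑p.1 ⁻¹' {cc}))‖₊ : ℝ≥0∞) := by
        rw [hexp, ← ENNReal.coe_finset_sum]
        exact ENNReal.coe_le_coe.mpr (nnnorm_sum_le _ _)
    _ ≤ ∑ cc ∈ p.1.range, (‖cc‖₊ : ℝ≥0∞) * vvar x' (⇑p.1 ⁻¹' {cc}) := by
        refine Finset.sum_le_sum fun cc _ => ?_
        rw [nnnorm_mul, ENNReal.coe_mul]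
        exact mul_le_mul_right (vvar_single hvar x' (p.1.measurableSet_fiber cc)) _
    _ = (p.1.map (fun cc => (‖cc‖₊ : ℝ≥0∞))).lintegral (vvar x') :=
        (SimpleFunc.map_lintegral _ _).symm
    _ = ∫⁻ t, (‖p.1 t‖₊ : ℝ≥0∞) ∂(vvar x') := by
        rw [← SimpleFunc.lintegral_eq_lintegral]
        simp [SimpleFunc.map_apply]
    _ ≤ ∫⁻ t, ((φ t : ℝ≥0) : ℝ≥0∞) ∂(vvar x') := by
        refine lintegral_mono fun t => ENNReal.coe_le_coe.mpr ?_
        rw [← NNReal.coe_le_coe]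
        push_cast [coe_nnnorm]
        exact p.2 t
    _ ≤ Wf vvar (fun t => ((φ t : ℝ≥0) : ℝ≥0∞)) := by
        unfold Wf
        exact le_iSup₂ (f := fun (y' : X →L[ℂ] ℂ) (_ : ‖y'‖ ≤ 1) =>
          ∫⁻ t, ((φ t : ℝ≥0) : ℝ≥0∞) ∂(vvar y')) x' hx'1

lemma Wf_eq_SS {ν : VectorMeasure G X} {vvar : (X →L[ℂ] ℂ) → Measure G}
    (hvar : ∀ x', IsVariationOf (pairVM ν x') (vvar x')) (φ : SimpleFunc G ℝ≥0) :
    Wf vvar (fun t => ((φ t : ℝ≥0) : ℝ≥0∞)) = SS ν φ := by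
  refine le_antisymm ?_ (SS_le_Wf hvar φ)
  unfold Wf
  exact iSup₂_le fun x' hx' => (lintegral_le_Sx hvar φ x').trans (Sx_le_SS ν hx' φ)


lemma SS_comp {ν : VectorMeasure G X} (h : G ≃ₜ G) (hinv : NormIntegralInvariant ν h)
    (φ : SimpleFunc G ℝ≥0) :
    SS ν (φ.comp ⇑h.symm h.symm.continuous.measurable) = SS ν φ := by
  refine le_antisymm ?_ ?_
  · refine iSup_le fun p => ?_
    have hb : ∀ t, ‖(p.1.comp ⇑h h.continuous.measurable) t‖ ≤ ((φ t : ℝ≥0) : ℝ) := by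
      intro t
      simpa [SimpleFunc.coe_comp, Function.comp, h.symm_apply_apply] using p.2 (h t)
    have hcomp : (p.1.comp ⇑h h.continuous.measurable).comp ⇑h.symm
        h.symm.continuous.measurable = p.1 := by
      ext t; simp [SimpleFunc.coe_comp, Function.comp, h.apply_symm_apply]
    have hn : ‖simpleIntegral ν p.1‖
        = ‖simpleIntegral ν (p.1.comp ⇑h h.continuous.measurable)‖ := by
      conv_lhs => rw [← hcomp]
      exact hinv _
    refine le_iSup_of_le (⟨p.1.comp ⇑h h.continuous.measurable, hb⟩ : Bdd φ) ?_
    simp only [ENNReal.coe_le_coe]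
    exact le_of_eq (NNReal.eq (by rw [coe_nnnorm, coe_nnnorm, hn]))
  · refine iSup_le fun p => ?_
    have hb : ∀ t, ‖(p.1.comp ⇑h.symm h.symm.continuous.measurable) t‖
        ≤ (((φ.comp ⇑h.symm h.symm.continuous.measurable) t : ℝ≥0) : ℝ) := by
      intro t; simpa [SimpleFunc.coe_comp, Function.comp] using p.2 (h.symm t)
    refine le_iSup_of_le
      (⟨p.1.comp ⇑h.symm h.symm.continuous.measurable, hb⟩ : Bdd _) ?_
    simp only [ENNReal.coe_le_coe]
    exact le_of_eq (NNReal.eq (by rw [coe_nnnorm, coe_nnnorm]; exact (hinv p.1).symm))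

lemma key_le {ν : VectorMeasure G X} {vvar : (X →L[ℂ] ℂ) → Measure G}
    (h : G ≃ₜ G) (hinv : NormIntegralInvariant ν h)
    (hvar : ∀ x', IsVariationOf (pairVM ν x') (vvar x'))
    (u : G → ℝ≥0∞) {x' : X →L[ℂ] ℂ} (hx' : ‖x'‖ ≤ 1)
    (hU : ∀ y' : X →L[ℂ] ℂ, ‖y'‖ ≤ 1 → ∫⁻ t, u t ∂(vvar y') ≤ 1) :
    ∫⁻ t, u (h.symm t) ∂(vvar x') ≤ 1 := by
  rw [lintegral_eq_nnreal (fun t => u (h.symm t)) (vvar x')]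
  refine iSup₂_le fun φ hφ => ?_
  have h1 : (SimpleFunc.map ENNReal.ofNNReal φ).lintegral (vvar x')
      = ∫⁻ t, ((φ t : ℝ≥0) : ℝ≥0∞) ∂(vvar x') := by
    rw [← SimpleFunc.lintegral_eq_lintegral]; simp [SimpleFunc.map_apply]
  rw [h1]
  set ψ := φ.comp ⇑h h.continuous.measurable with hψ
  have hφψ : φ = ψ.comp ⇑h.symm h.symm.continuous.measurable := by
    ext t; simp [hψ, SimpleFunc.coe_comp, Function.comp, h.apply_symm_apply]
  have hle : ∫⁻ t, ((φ t : ℝ≥0) : ℝ≥0∞) ∂(vvar x')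
      ≤ Wf vvar (fun t => ((φ t : ℝ≥0) : ℝ≥0∞)) := by
    unfold Wf
    exact le_iSup₂ (f := fun (y' : X →L[ℂ] ℂ) (_ : ‖y'‖ ≤ 1) =>
      ∫⁻ t, ((φ t : ℝ≥0) : ℝ≥0∞) ∂(vvar y')) x' hx'
  have heq : Wf vvar (fun t => ((φ t : ℝ≥0) : ℝ≥0∞))
      = Wf vvar (fun t => ((ψ t : ℝ≥0) : ℝ≥0∞)) := by
    conv_lhs => rw [hφψ]
    rw [Wf_eq_SS hvar, Wf_eq_SS hvar, SS_comp h hinv]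
  have hfin : Wf vvar (fun t => ((ψ t : ℝ≥0) : ℝ≥0∞)) ≤ 1 := by
    unfold Wf
    refine iSup₂_le fun y' hy' => ?_
    refine le_trans (lintegral_mono fun t => ?_) (hU y' hy')
    simpa [hψ, SimpleFunc.coe_comp, Function.comp, h.symm_apply_apply] using hφ (h t)
  exact hle.trans (heq.le.trans hfin)

lemma weakNorm_comp_le {ν : VectorMeasure G X} {vvar : (X →L[ℂ] ℂ) → Measure G}
    (h : G ≃ₜ G) (hinv : NormIntegralInvariant ν h)
    (hvar : ∀ x', IsVariationOf (pairVM ν x') (vvar x'))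
    {Φ : ℝ → ℝ} (hΦ : MonotoneOn Φ (Set.Ici 0))
    (g : G → ℂ) {q : ℝ} (hq : weakNorm vvar Φ g < ENNReal.ofReal q) :
    weakNorm vvar Φ (fun t => g (h.symm t)) ≤ ENNReal.ofReal q := by
  have hq0 : 0 < q := by
    by_contra hq0
    push_neg at hq0
    rw [ENNReal.ofReal_eq_zero.mpr hq0] at hq
    exact ENNReal.not_lt_zero hq
  have hU : ∀ y' : X →L[ℂ] ℂ, ‖y'‖ ≤ 1 →
      ∫⁻ t, ENNReal.ofReal (Φ (‖g t‖ / q)) ∂(vvar y') ≤ 1 := by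
    intro y' hy'
    have hlux : luxNorm Φ (vvar y') g < ENNReal.ofReal q :=
      lt_of_le_of_lt (le_iSup₂ (f := fun (z' : X →L[ℂ] ℂ) (_ : ‖z'‖ ≤ 1) =>
        luxNorm Φ (vvar z') g) y' hy') hq
    rw [luxNorm] at hlux
    obtain ⟨k, hk, hklt⟩ := sInf_lt_iff.mp hlux
    obtain ⟨r, hr0, hkr, hint⟩ := hk
    rw [hkr] at hklt
    have hrq : r ≤ q := ((ENNReal.ofReal_lt_ofReal_iff hq0).mp hklt).le
    refine le_trans (lintegral_mono fun t => ENNReal.ofReal_le_ofReal ?_) hint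
    exact hΦ (Set.mem_Ici.mpr (div_nonneg (norm_nonneg _) hq0.le))
      (Set.mem_Ici.mpr (div_nonneg (norm_nonneg _) hr0.le))
      (div_le_div_of_nonneg_left (norm_nonneg _) hr0 hrq)
  rw [weakNorm]
  refine iSup₂_le fun x' hx' => ?_
  rw [luxNorm]
  exact sInf_le ⟨q, hq0, rfl, key_le h hinv hvar
    (fun t => ENNReal.ofReal (Φ (‖g t‖ / q))) hx' hU⟩


/-- If `ν` is norm integral `h`-invariant and `f ∈ L^Φ(ν)` (closure of simple functions in the
weak Orlicz norm), then `f_h = f ∘ h⁻¹ ∈ L^Φ(ν)`. -/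
theorem memLPhi_comp_homeomorph (ν : VectorMeasure G X) (h : G ≃ₜ G)
    (hinv : NormIntegralInvariant ν h) (Φ : ℝ → ℝ) (hΦ : IsYoung Φ)
    (vvar : (X →L[ℂ] ℂ) → Measure G)
    (hvar : ∀ x', IsVariationOf (pairVM ν x') (vvar x'))
    (f : G → ℂ) (hmem : MemLPhi vvar Φ f) :
    MemLPhi vvar Φ (f ∘ ⇑h.symm) := by
  constructor
  · exact hmem.1.comp h.symm.continuous.measurable
  · intro ε hε
    obtain ⟨φ, hφ⟩ := hmem.2 ε hε
    refine ⟨φ.comp ⇑h.symm h.symm.continuous.measurable, ?_⟩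
    obtain ⟨q, hq0, hq1, hq2⟩ := ENNReal.lt_iff_exists_real_btwn.mp hφ
    have hmain := weakNorm_comp_le h hinv hvar hΦ.1.monotoneOn (fun t => f t - φ t) hq1
    exact lt_of_le_of_lt hmain hq2

end
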